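/- arXiv:2409.03834 — 5 statements merged into one kernel-verified Lean document; each statement's English description precedes it below -/
import Mathlib

section
/- Let X be a Hilbert space, G : X → Y a map into a Hilbert space Y satisfying the weak tangential cone condition: for all θ, θ̂ in a ball B, 2⟨G(θ)-G(θ̂), G'(θ)(θ-θ̂)⟩ ≥ (M²+μ)‖G(θ)-G(θ̂)‖² with μ > 0. If a sequence θⁿ in B converges weakly to θ̄ ∈ B, ‖G(θⁿ)-y‖ → 0, G'(θ̄) is a bounded linear operator with ‖G'(θ̄)‖ ≤ M, and ‖θ̄-θⁿ‖ ≤ R for all n, then G(θ̄) = y. -/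
open Filter

open UniformSpace in
/-- If a bounded sequence converges weakly to 0, then any continuous linear functional
tends to 0 along it. -/
lemma weak_functional_tendsto {X : Type*} [NormedAddCommGroup X] [InnerProductSpace ℝ X]
    (f : X →L[ℝ] ℝ) (x : ℕ → X) (R : ℝ) (hR : ∀ n, ‖x n‖ ≤ R)
    (hweak : ∀ v : X, Tendsto (fun n => (inner ℝ (x n) v : ℝ)) atTop (nhds 0)) :
    Tendsto (fun n => f (x n)) atTop (nhds 0) := by
  set ι : X →L[ℝ] Completion X := Completion.toComplL
  have hdense : DenseRange ι := by
    simpa [ι, Completion.coe_toComplL] using Completion.denseRange_coe (α := X)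
  have hui : IsUniformInducing ι := by
    simpa [ι, Completion.coe_toComplL] using
      (Completion.isUniformEmbedding_coe X).isUniformInducing
  set fh : Completion X →L[ℝ] ℝ := f.extend ι
  set v : Completion X := (InnerProductSpace.toDual ℝ (Completion X)).symm fh
  have hrep : ∀ z : Completion X, fh z = (inner ℝ v z : ℝ) := fun z =>
    (InnerProductSpace.toDual_symm_apply (𝕜 := ℝ)).symm
  have hfx : ∀ n, f (x n) = (inner ℝ v (ι (x n)) : ℝ) := fun n => by
    rw [← hrep]
    exact (ContinuousLinearMap.extend_eq f hdense hui (x n)).symm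
  simp only [hfx]
  rw [NormedAddCommGroup.tendsto_nhds_zero]
  intro ε hε
  have hR0 : (0:ℝ) < R + 1 := lt_of_le_of_lt (le_trans (norm_nonneg _) (hR 0)) (lt_add_one _)
  -- choose w ∈ X close to v
  obtain ⟨w, hw⟩ : ∃ w : X, ‖v - ι w‖ < ε / 2 / (R + 1) := by
    have := hdense.exists_dist_lt v (by positivity : (0:ℝ) < ε / 2 / (R + 1))
    obtain ⟨w, hw⟩ := this
    rw [dist_eq_norm] at hw
    exact ⟨w, hw⟩
  have h2 := (hweak w).eventually (eventually_abs_sub_lt 0 (by positivity : (0:ℝ) < ε / 2))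
  rw [eventually_atTop] at h2
  obtain ⟨N, hN⟩ := h2
  rw [eventually_atTop]
  refine ⟨N, fun n hn => ?_⟩
  have key : (inner ℝ v (ι (x n)) : ℝ)
      = (inner ℝ (v - ι w) (ι (x n)) : ℝ) + (inner ℝ (x n) w : ℝ) := by
    rw [inner_sub_left]
    have : (inner ℝ (ι w) (ι (x n)) : ℝ) = (inner ℝ w (x n) : ℝ) := by
      simp [ι, Completion.coe_toComplL, Completion.inner_coe]
    rw [this, real_inner_comm w (x n)]
    ring
  rw [key]
  have hb1 : ‖(inner ℝ (v - ι w) (ι (x n)) : ℝ)‖ ≤ ε / 2 / (R + 1) * R := by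
    calc ‖(inner ℝ (v - ι w) (ι (x n)) : ℝ)‖ ≤ ‖v - ι w‖ * ‖ι (x n)‖ := norm_inner_le_norm _ _
      _ ≤ ε / 2 / (R + 1) * R := by
          apply mul_le_mul hw.le ?_ (norm_nonneg _) (by positivity)
          simpa [ι, Completion.coe_toComplL, Completion.norm_coe] using hR n
  have hb2 : ‖(inner ℝ (x n) w : ℝ)‖ < ε / 2 := by
    simpa [Real.norm_eq_abs] using hN n hn
  have hRR : ε / 2 / (R + 1) * R < ε / 2 := by
    rw [div_mul_eq_mul_div, div_lt_iff₀ hR0]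
    nlinarith
  calc ‖(inner ℝ (v - ι w) (ι (x n)) : ℝ) + (inner ℝ (x n) w : ℝ)‖
      ≤ ‖(inner ℝ (v - ι w) (ι (x n)) : ℝ)‖ + ‖(inner ℝ (x n) w : ℝ)‖ := norm_add_le _ _
    _ < ε := by linarith

theorem stmt0 {X Y : Type*} [NormedAddCommGroup X] [InnerProductSpace ℝ X]
    [NormedAddCommGroup Y] [InnerProductSpace ℝ Y]
    (B : Set X) (G : X → Y) (G' : X → X →L[ℝ] Y) (y : Y)
    (M μ R : ℝ) (hμ : 0 < μ)
    (hTC : ∀ θ ∈ B, ∀ θh ∈ B,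
      2 * (inner ℝ (G θ - G θh) (G' θ (θ - θh)) : ℝ) ≥ (M ^ 2 + μ) * ‖G θ - G θh‖ ^ 2)
    (θ : ℕ → X) (θbar : X)
    (hθB : ∀ n, θ n ∈ B) (hθbarB : θbar ∈ B)
    (hweak : ∀ v : X, Tendsto (fun n => (inner ℝ (θ n) v : ℝ)) atTop (nhds (inner ℝ θbar v)))
    (hres : Tendsto (fun n => ‖G (θ n) - y‖) atTop (nhds 0))
    (hM : ‖G' θbar‖ ≤ M)
    (hR : ∀ n, ‖θbar - θ n‖ ≤ R) :
    G θbar = y := by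
  set A := G' θbar
  set d := G θbar - y with hd
  -- weak convergence of x n := θbar - θ n to 0
  set x : ℕ → X := fun n => θbar - θ n with hx
  have hweak0 : ∀ v : X, Tendsto (fun n => (inner ℝ (x n) v : ℝ)) atTop (nhds 0) := by
    intro v
    have := (hweak v).const_sub (inner ℝ θbar v : ℝ)
    simp only [sub_self] at this
    convert this using 2 with n
    simp [hx, inner_sub_left]
  -- the key functional
  set f : X →L[ℝ] ℝ := (innerSL ℝ d).comp A with hf
  have hkey : Tendsto (fun n => f (x n)) atTop (nhds 0) :=
    weak_functional_tendsto f x R hR hweak0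
  -- second term: |⟨y - Gθn, A(xn)⟩| ≤ ‖Gθn - y‖ M R → 0
  have hMR : ∀ n, ‖A (x n)‖ ≤ M * R := by
    intro n
    calc ‖A (x n)‖ ≤ ‖A‖ * ‖x n‖ := A.le_opNorm _
      _ ≤ M * R := by
          apply mul_le_mul hM (hR n) (norm_nonneg _)
          exact le_trans (norm_nonneg _) hM
  have hsecond : Tendsto (fun n => (inner ℝ (y - G (θ n)) (A (x n)) : ℝ)) atTop (nhds 0) := by
    rw [NormedAddCommGroup.tendsto_nhds_zero]
    have h0 := (NormedAddCommGroup.tendsto_nhds_zero.mp (by simpa using hres))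
    intro ε hε
    have hMR0 : 0 ≤ M * R := le_trans (norm_nonneg _) (hMR 0)
    have hpos : (0:ℝ) < M * R + 1 := by linarith
    filter_upwards [h0 (ε / (M * R + 1)) (by positivity)] with n hn
    have : ‖(inner ℝ (y - G (θ n)) (A (x n)) : ℝ)‖ ≤ ‖y - G (θ n)‖ * (M * R) := by
      calc ‖(inner ℝ (y - G (θ n)) (A (x n)) : ℝ)‖ ≤ ‖y - G (θ n)‖ * ‖A (x n)‖ :=
            norm_inner_le_norm _ _
        _ ≤ ‖y - G (θ n)‖ * (M * R) :=
            mul_le_mul_of_nonneg_left (hMR n) (norm_nonneg _)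
    have hn' : ‖y - G (θ n)‖ < ε / (M * R + 1) := by
      rw [norm_sub_rev]
      simpa using hn
    calc ‖(inner ℝ (y - G (θ n)) (A (x n)) : ℝ)‖ ≤ ‖y - G (θ n)‖ * (M * R) := this
      _ ≤ ‖y - G (θ n)‖ * (M * R + 1) :=
          mul_le_mul_of_nonneg_left (by linarith) (norm_nonneg _)
      _ < ε / (M * R + 1) * (M * R + 1) := mul_lt_mul_of_pos_right hn' hpos
      _ = ε := div_mul_cancel₀ _ (ne_of_gt hpos)
  -- the full inner ℝ product tends to 0
  have hsum : Tendsto (fun n => (inner ℝ (G θbar - G (θ n)) (A (x n)) : ℝ)) atTop (nhds 0) := by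
    have : ∀ n, (inner ℝ (G θbar - G (θ n)) (A (x n)) : ℝ)
        = f (x n) + (inner ℝ (y - G (θ n)) (A (x n)) : ℝ) := by
      intro n
      have : G θbar - G (θ n) = d + (y - G (θ n)) := by rw [hd]; abel
      rw [this, inner_add_left, hf]
      simp [ContinuousLinearMap.comp_apply, innerSL_apply_apply]
    simp only [this]
    simpa using hkey.add hsecond
  -- ‖G θbar - G θn‖² → ‖d‖²
  have hnorm : Tendsto (fun n => ‖G θbar - G (θ n)‖ ^ 2) atTop (nhds (‖d‖ ^ 2)) := by
    have h1 : Tendsto (fun n => G (θ n) - y) atTop (nhds 0) := by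
      rwa [tendsto_zero_iff_norm_tendsto_zero]
    have h2 : Tendsto (fun n => G θbar - G (θ n)) atTop (nhds d) := by
      have := (tendsto_const_nhds (x := d) (f := atTop)).sub h1
      simp only [sub_zero] at this
      convert this using 2 with n
      rw [hd]; abel
    exact ((continuous_norm.tendsto d).comp h2).pow 2
  -- conclude: (M² + μ) ‖d‖² ≤ 0
  have hle : (M ^ 2 + μ) * ‖d‖ ^ 2 ≤ 0 := by
    have hlim1 : Tendsto (fun n => (M ^ 2 + μ) * ‖G θbar - G (θ n)‖ ^ 2) atTop
        (nhds ((M ^ 2 + μ) * ‖d‖ ^ 2)) := hnorm.const_mul _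
    have hlim2 : Tendsto (fun n => 2 * (inner ℝ (G θbar - G (θ n)) (A (x n)) : ℝ)) atTop
        (nhds 0) := by simpa using hsum.const_mul 2
    have := le_of_tendsto_of_tendsto' hlim1 hlim2 fun n =>
      hTC θbar hθbarB (θ n) (hθB n)
    simpa using this
  have hMμ : 0 < M ^ 2 + μ := by positivity
  have hd2 : ‖d‖ ^ 2 ≤ 0 := by nlinarith [sq_nonneg ‖d‖]
  have hdn : ‖d‖ = 0 := by nlinarith [norm_nonneg d, sq_nonneg ‖d‖]
  have : d = 0 := norm_eq_zero.mp hdn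
  exact sub_eq_zero.mp this
end

section
/- Let {θʲ} be a sequence in a Hilbert space X that is Fejér monotone with respect to every point in a nonempty set S (i.e., ‖θ^{j+1}-θ*‖ ≤ ‖θʲ-θ*‖ for all θ* ∈ S and all j). If θ̄ and θ* are both in S and both are weak accumulation points of {θʲ}, then θ̄ = θ*. -/
open Filter

theorem stmt1 {X : Type*} [NormedAddCommGroup X] [InnerProductSpace ℝ X]
    (S : Set X) (hS : S.Nonempty) (θ : ℕ → X)
    (hFejer : ∀ θstar ∈ S, ∀ j : ℕ, ‖θ (j + 1) - θstar‖ ≤ ‖θ j - θstar‖)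
    (θbar θstar : X) (hθbar : θbar ∈ S) (hθstar : θstar ∈ S)
    (hacc1 : ∃ φ : ℕ → ℕ, StrictMono φ ∧
      ∀ v : X, Tendsto (fun n => (inner ℝ (θ (φ n)) v : ℝ)) atTop (nhds (inner ℝ θbar v)))
    (hacc2 : ∃ ψ : ℕ → ℕ, StrictMono ψ ∧
      ∀ v : X, Tendsto (fun n => (inner ℝ (θ (ψ n)) v : ℝ)) atTop (nhds (inner ℝ θstar v))) :
    θbar = θstar := by
  obtain ⟨φ, hφ, hφlim⟩ := hacc1
  obtain ⟨ψ, hψ, hψlim⟩ := hacc2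
  -- the distance sequences converge
  have anti : ∀ z ∈ S, Antitone (fun j => ‖θ j - z‖) := by
    intro z hz
    exact antitone_nat_of_succ_le (fun n => hFejer z hz n)
  have conv : ∀ z ∈ S, ∃ a : ℝ, Tendsto (fun j => ‖θ j - z‖) atTop (nhds a) := by
    intro z hz
    refine ⟨_, tendsto_atTop_ciInf (anti z hz) ⟨0, ?_⟩⟩
    rintro x ⟨j, rfl⟩
    exact norm_nonneg _
  obtain ⟨a, ha⟩ := conv θbar hθbar
  obtain ⟨b, hb⟩ := conv θstar hθstar
  -- the inner product with (θbar - θstar) of the whole sequence converges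
  set c : ℝ := (‖θbar‖ ^ 2 - ‖θstar‖ ^ 2 - (a ^ 2 - b ^ 2)) / 2
  have key : ∀ j, (inner ℝ (θ j) (θbar - θstar) : ℝ) =
      (‖θbar‖ ^ 2 - ‖θstar‖ ^ 2 - (‖θ j - θbar‖ ^ 2 - ‖θ j - θstar‖ ^ 2)) / 2 := by
    intro j
    rw [inner_sub_right]
    have h1 : ‖θ j - θbar‖ ^ 2 = ‖θ j‖ ^ 2 - 2 * inner ℝ (θ j) θbar + ‖θbar‖ ^ 2 :=
      @norm_sub_sq_real X _ _ (θ j) θbar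
    have h2 : ‖θ j - θstar‖ ^ 2 = ‖θ j‖ ^ 2 - 2 * inner ℝ (θ j) θstar + ‖θstar‖ ^ 2 :=
      @norm_sub_sq_real X _ _ (θ j) θstar
    rw [h1, h2]; ring
  have hlim : Tendsto (fun j => (inner ℝ (θ j) (θbar - θstar) : ℝ)) atTop (nhds c) := by
    simp only [key]
    have : Tendsto (fun j => ‖θ j - θbar‖ ^ 2 - ‖θ j - θstar‖ ^ 2) atTop
        (nhds (a ^ 2 - b ^ 2)) := ((ha.pow 2).sub (hb.pow 2))
    exact ((tendsto_const_nhds.sub this).div_const 2)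
  have lim1 : (inner ℝ θbar (θbar - θstar) : ℝ) = c :=
    tendsto_nhds_unique (hφlim (θbar - θstar)) (hlim.comp hφ.tendsto_atTop)
  have lim2 : (inner ℝ θstar (θbar - θstar) : ℝ) = c :=
    tendsto_nhds_unique (hψlim (θbar - θstar)) (hlim.comp hψ.tendsto_atTop)
  have : (inner ℝ (θbar - θstar) (θbar - θstar) : ℝ) = 0 := by
    rw [inner_sub_left, lim1, lim2, sub_self]
  have := inner_self_eq_zero.mp this
  exact sub_eq_zero.mp this
end

section
/- Let F : V → W be a map between Hilbert spaces satisfying, on a ball B, the weak tangential cone condition 2⟨F(u)-F(û), F'(u)(u-û)⟩ ≥ (M²+μ)‖F(u)-F(û)‖² with ‖F'(u)‖ ≤ M and M² + μ < 2, and suppose F is coercive: C‖F(u)-F(u*)‖ ≥ ‖u-u*‖^α with α ≥ 1, where F(u*) = φ. Then the Landweber iterates u_{k+1} = u_k - F'(u_k)*(F(u_k)-φ), started in B, satisfy ‖u_k - u*‖ ≤ (C²/(μ k))^{1/(2α)} ‖u_0 - u*‖^{1/α}. -/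
theorem stmt8 {V W : Type*} [NormedAddCommGroup V] [InnerProductSpace ℝ V] [CompleteSpace V]
    [NormedAddCommGroup W] [InnerProductSpace ℝ W] [CompleteSpace W]
    (B : Set V) (F : V → W) (F' : V → V →L[ℝ] W) (φ : W)
    (M μ C α : ℝ) (hμ : 0 < μ) (hC : 0 < C) (hα : 1 ≤ α) (hM2 : M ^ 2 + μ < 2)
    (ustar : V) (hustarB : ustar ∈ B) (hsol : F ustar = φ)
    (hTC : ∀ u ∈ B, ∀ uh ∈ B,
      2 * (inner ℝ (F u - F uh) (F' u (u - uh)) : ℝ) ≥ (M ^ 2 + μ) * ‖F u - F uh‖ ^ 2)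
    (hbdd : ∀ u ∈ B, ‖F' u‖ ≤ M)
    (hcoe : ∀ u ∈ B, C * ‖F u - F ustar‖ ≥ ‖u - ustar‖ ^ α)
    (u : ℕ → V) (hu0 : u 0 ∈ B) (huB : ∀ k, u k ∈ B)
    (hiter : ∀ k, u (k + 1) = u k - ContinuousLinearMap.adjoint (F' (u k)) (F (u k) - φ)) :
    ∀ k : ℕ, 1 ≤ k →
      ‖u k - ustar‖ ≤ (C ^ 2 / (μ * k)) ^ (1 / (2 * α)) * ‖u 0 - ustar‖ ^ (1 / α) := by
  have hα0 : (0:ℝ) < α := lt_of_lt_of_le one_pos hα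
  have hM0 : 0 ≤ M := (norm_nonneg (F' ustar)).trans (hbdd ustar hustarB)
  set d : ℕ → ℝ := fun k => ‖u k - ustar‖ with hd
  have hd0 : ∀ k, 0 ≤ d k := fun k => norm_nonneg _
  set r : ℕ → ℝ := fun k => ‖F (u k) - F ustar‖ with hr
  have hr0 : ∀ k, 0 ≤ r k := fun k => norm_nonneg _
  -- one-step decrease
  have hstep : ∀ k, d (k+1) ^ 2 + μ * r k ^ 2 ≤ d k ^ 2 := by
    intro k
    set A := F' (u k) with hA
    set y := ContinuousLinearMap.adjoint A (F (u k) - F ustar) with hy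
    have hx : u (k+1) - ustar = (u k - ustar) - y := by
      rw [hiter k, ← hsol, ← hA, ← hy]; abel
    have hinner : (inner ℝ (u k - ustar) y : ℝ)
        = inner ℝ (F (u k) - F ustar) (A (u k - ustar)) := by
      rw [hy, ContinuousLinearMap.adjoint_inner_right]
      exact real_inner_comm _ _
    have hTC' := hTC (u k) (huB k) ustar hustarB
    have hinner2 : 2 * (inner ℝ (u k - ustar) y : ℝ) ≥ (M ^ 2 + μ) * r k ^ 2 := by
      rw [hinner]; exact hTC'
    have hyn : ‖y‖ ≤ M * r k := by
      calc ‖y‖ ≤ ‖ContinuousLinearMap.adjoint A‖ * ‖F (u k) - F ustar‖ :=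
            (ContinuousLinearMap.adjoint A).le_opNorm _
        _ ≤ M * r k := by
            have : ‖ContinuousLinearMap.adjoint A‖ = ‖A‖ :=
              ContinuousLinearMap.adjoint.norm_map A
            rw [this, hr]
            exact mul_le_mul_of_nonneg_right (hbdd (u k) (huB k)) (norm_nonneg _)
    have hyn2 : ‖y‖ ^ 2 ≤ M ^ 2 * r k ^ 2 := by
      have := mul_le_mul hyn hyn (norm_nonneg y) (mul_nonneg hM0 (hr0 k))
      nlinarith [norm_nonneg y]
    have hexp : d (k+1) ^ 2 = d k ^ 2 - 2 * (inner ℝ (u k - ustar) y : ℝ) + ‖y‖ ^ 2 := by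
      simp only [hd, hx]
      rw [@norm_sub_sq_real]
    rw [hexp]
    linarith
  -- monotone decrease of d
  have hdec : ∀ k, d (k+1) ≤ d k := by
    intro k
    have h1 : d (k+1) ^ 2 ≤ d k ^ 2 := by
      have := hstep k
      nlinarith [hr0 k, hμ]
    calc d (k+1) = Real.sqrt (d (k+1) ^ 2) := (Real.sqrt_sq (hd0 _)).symm
      _ ≤ Real.sqrt (d k ^ 2) := Real.sqrt_le_sqrt h1
      _ = d k := Real.sqrt_sq (hd0 _)
  have hmono : ∀ j k, j ≤ k → d k ≤ d j := by
    intro j k hjk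
    exact (antitone_nat_of_succ_le hdec) hjk
  -- telescoping sum
  have hsum : ∀ k, d k ^ 2 + μ * ∑ j ∈ Finset.range k, r j ^ 2 ≤ d 0 ^ 2 := by
    intro k
    induction k with
    | zero => simp
    | succ k ih =>
        rw [Finset.sum_range_succ]
        have := hstep k
        linarith
  intro k hk
  have hk0 : (0:ℝ) < (k:ℝ) := by exact_mod_cast hk
  have hμk : 0 < μ * k := mul_pos hμ hk0
  -- lower bound on each residual term
  have hterm : ∀ j ∈ Finset.range k, d k ^ (2*α) / C ^ 2 ≤ r j ^ 2 := by
    intro j hj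
    have hjk : j ≤ k := le_of_lt (Finset.mem_range.mp hj)
    have h1 : d k ^ α ≤ d j ^ α := Real.rpow_le_rpow (hd0 k) (hmono j k hjk) hα0.le
    have h2 : d j ^ α ≤ C * r j := hcoe (u j) (huB j)
    have h3 : d k ^ α ≤ C * r j := h1.trans h2
    have h4 : (d k ^ α) ^ 2 ≤ (C * r j) ^ 2 := by
      have := Real.rpow_nonneg (hd0 k) α
      nlinarith
    have h5 : d k ^ (2*α) = (d k ^ α) ^ 2 := by
      rw [mul_comm, Real.rpow_mul (hd0 k)]
      norm_num
    rw [h5, div_le_iff₀ (by positivity)]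
    calc (d k ^ α) ^ 2 ≤ (C * r j) ^ 2 := h4
      _ = r j ^ 2 * C ^ 2 := by ring
  have hsumlb : (k:ℝ) * (d k ^ (2*α) / C ^ 2) ≤ ∑ j ∈ Finset.range k, r j ^ 2 := by
    have := Finset.card_nsmul_le_sum (Finset.range k) (fun j => r j ^ 2)
      (d k ^ (2*α) / C ^ 2) hterm
    simpa [nsmul_eq_mul] using this
  have hkey : d k ^ (2*α) ≤ C ^ 2 * d 0 ^ 2 / (μ * k) := by
    have h6 : μ * ((k:ℝ) * (d k ^ (2*α) / C ^ 2)) ≤ d 0 ^ 2 := by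
      have h7 := hsum k
      have h8 : μ * ((k:ℝ) * (d k ^ (2*α) / C ^ 2)) ≤ μ * ∑ j ∈ Finset.range k, r j ^ 2 :=
        mul_le_mul_of_nonneg_left hsumlb hμ.le
      nlinarith [sq_nonneg (d k)]
    rw [le_div_iff₀ hμk]
    have hC2 : (0:ℝ) < C ^ 2 := by positivity
    field_simp at h6
    nlinarith [h6]
  -- take rpow 1/(2α) of both sides
  have h2α : (0:ℝ) < 2 * α := by linarith
  have hdk : d k = (d k ^ (2*α)) ^ (1/(2*α)) := by
    rw [← Real.rpow_mul (hd0 k), mul_one_div, div_self h2α.ne', Real.rpow_one]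
  have hfin : d k ≤ (C ^ 2 * d 0 ^ 2 / (μ * k)) ^ (1/(2*α)) := by
    rw [hdk]
    exact Real.rpow_le_rpow (Real.rpow_nonneg (hd0 k) _) hkey (by positivity)
  have hrhs : (C ^ 2 * d 0 ^ 2 / (μ * k)) ^ (1/(2*α))
      = (C ^ 2 / (μ * k)) ^ (1/(2*α)) * d 0 ^ (1/α) := by
    have e1 : C ^ 2 * d 0 ^ 2 / (μ * k) = (C ^ 2 / (μ * k)) * d 0 ^ 2 := by ring
    rw [e1, Real.mul_rpow (by positivity) (sq_nonneg _)]
    congr 1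
    have e2 : (d 0 : ℝ) ^ 2 = d 0 ^ ((2:ℝ)) := by
      rw [show ((2:ℝ)) = ((2:ℕ):ℝ) by norm_num, Real.rpow_natCast]
    rw [e2, ← Real.rpow_mul (hd0 0)]
    congr 1
    field_simp
  rw [hrhs] at hfin
  exact hfin
end

section
/- Under the weak tangential cone condition 2⟨F(u)-F(u*), F'(u)(u-u*)⟩ ≥ (M²+μ)‖F(u)-F(u*)‖² with ‖F'(u)‖ ≤ M, each Landweber step u_{k+1} = u_k - F'(u_k)*(F(u_k)-φ) with φ = F(u*) satisfies ‖u_{k+1}-u*‖² ≤ ‖u_k-u*‖² - μ‖F(u_k)-φ‖². -/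
theorem stmt9 {V W : Type*} [NormedAddCommGroup V] [InnerProductSpace ℝ V] [CompleteSpace V]
    [NormedAddCommGroup W] [InnerProductSpace ℝ W] [CompleteSpace W]
    (F : V → W) (F' : V → V →L[ℝ] W) (φ : W) (M μ : ℝ)
    (ustar : V) (hsol : F ustar = φ) (u : ℕ → V)
    (hTC : ∀ k, 2 * (inner ℝ (F (u k) - F ustar) (F' (u k) (u k - ustar)) : ℝ) ≥
      (M ^ 2 + μ) * ‖F (u k) - F ustar‖ ^ 2)
    (hbdd : ∀ k, ‖F' (u k)‖ ≤ M)
    (hiter : ∀ k, u (k + 1) = u k - ContinuousLinearMap.adjoint (F' (u k)) (F (u k) - φ)) :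
    ∀ k, ‖u (k + 1) - ustar‖ ^ 2 ≤ ‖u k - ustar‖ ^ 2 - μ * ‖F (u k) - φ‖ ^ 2 := by
  intro k
  set A := F' (u k)
  set r := F (u k) - φ with hr
  set x := u k - ustar with hx
  set a := ContinuousLinearMap.adjoint A r with ha
  have hstep : u (k + 1) - ustar = x - a := by
    rw [hiter k]; exact sub_right_comm _ _ _
  have hsq : ‖x - a‖ ^ 2 = ‖x‖ ^ 2 - 2 * inner ℝ x a + ‖a‖ ^ 2 :=
    norm_sub_sq_real x a
  have hadj : (inner ℝ x a : ℝ) = inner ℝ (A x) r := by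
    rw [ha, ContinuousLinearMap.adjoint_inner_right]
  have hTCk : 2 * (inner ℝ (A x) r : ℝ) ≥ (M ^ 2 + μ) * ‖r‖ ^ 2 := by
    have := hTC k
    rwa [hsol, real_inner_comm] at this
  have hnorm_a : ‖a‖ ≤ M * ‖r‖ := by
    calc ‖a‖ ≤ ‖ContinuousLinearMap.adjoint A‖ * ‖r‖ := (ContinuousLinearMap.adjoint A).le_opNorm r
    _ = ‖A‖ * ‖r‖ := by rw [(ContinuousLinearMap.adjoint : (V →L[ℝ] W) ≃ₗᵢ⋆[ℝ] (W →L[ℝ] V)).norm_map]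
    _ ≤ M * ‖r‖ := by gcongr; exact hbdd k
  have ha2 : ‖a‖ ^ 2 ≤ M ^ 2 * ‖r‖ ^ 2 := by
    calc ‖a‖ ^ 2 ≤ (M * ‖r‖) ^ 2 := by
          apply pow_le_pow_left₀ (norm_nonneg _) hnorm_a
    _ = M ^ 2 * ‖r‖ ^ 2 := by ring
  rw [hstep, hsq, hadj]
  nlinarith [hTCk, ha2]
end

section
/- Let Q > 1, q ≥ 1, M, C ≥ 0, and define Γ̂(j) = M·(Qʲ-1)/(Q-1) + (C/q)·(Qʲ - (1/q)ʲ)/(Q - 1/q). Then Γ̂ is nondecreasing in j, and for any δ > 0 the choice j*(δ) = ⌊log_Q( (Q-1)/((M+C)√δ) + 1 )⌋ (when M+C>0) satisfies δ·Γ̂(j*(δ)) ≤ √δ, and in particular δ·Γ̂(j*(δ)) → 0 as δ → 0. -/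
open Filter

noncomputable def GammaHat (Q q M C : ℝ) (j : ℕ) : ℝ :=
  M * (Q ^ j - 1) / (Q - 1) + (C / q) * (Q ^ j - (1 / q) ^ j) / (Q - 1 / q)

noncomputable def jstar (Q M C δ : ℝ) : ℕ :=
  ⌊Real.log ((Q - 1) / ((M + C) * Real.sqrt δ) + 1) / Real.log Q⌋₊

lemma gamma_aux (Q r : ℝ) (hQ : 1 < Q) (hr0 : 0 < r) (hr1 : r ≤ 1) (j : ℕ) :
    r * (Q ^ j - r ^ j) / (Q - r) ≤ (Q ^ j - 1) / (Q - 1) := by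
  have hQr : 0 < Q - r := by linarith
  have hQ1 : 0 < Q - 1 := by linarith
  have h1 : (Q ^ j - r ^ j) / (Q - r) = ∑ i ∈ Finset.range j, Q ^ i * r ^ (j - 1 - i) := by
    rw [eq_comm, eq_div_iff hQr.ne', geom_sum₂_mul]
  have h2 : (Q ^ j - 1) / (Q - 1) = ∑ i ∈ Finset.range j, Q ^ i := by
    rw [eq_comm, geom_sum_eq (by linarith : Q ≠ 1)]
  rw [mul_div_assoc, h1, h2, Finset.mul_sum]
  apply Finset.sum_le_sum
  intro i hi
  have hij : i < j := Finset.mem_range.mp hi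
  have : r * (Q ^ i * r ^ (j - 1 - i)) = Q ^ i * r ^ (j - i) := by
    rw [show j - i = (j - 1 - i) + 1 by omega]
    ring
  rw [this]
  have hQi : 0 ≤ Q ^ i := by positivity
  have : r ^ (j - i) ≤ 1 := pow_le_one₀ hr0.le hr1
  nlinarith

lemma gamma_le (Q q M C : ℝ) (hQ : 1 < Q) (hq : 1 ≤ q) (hM : 0 ≤ M) (hC : 0 ≤ C) (j : ℕ) :
    GammaHat Q q M C j ≤ (M + C) * (Q ^ j - 1) / (Q - 1) := by
  have hq0 : 0 < q := by linarith
  have hr0 : 0 < 1 / q := by positivity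
  have hr1 : 1 / q ≤ 1 := by
    rw [div_le_one hq0]; exact hq
  have key := gamma_aux Q (1 / q) hQ hr0 hr1 j
  unfold GammaHat
  have hQ1 : 0 < Q - 1 := by linarith
  have h2 : (C / q) * (Q ^ j - (1 / q) ^ j) / (Q - 1 / q) ≤ C * (Q ^ j - 1) / (Q - 1) := by
    calc (C / q) * (Q ^ j - (1 / q) ^ j) / (Q - 1 / q)
        = C * ((1 / q) * (Q ^ j - (1 / q) ^ j) / (Q - 1 / q)) := by ring
      _ ≤ C * ((Q ^ j - 1) / (Q - 1)) := mul_le_mul_of_nonneg_left key hC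
      _ = C * (Q ^ j - 1) / (Q - 1) := by ring
  have h1 : M * (Q ^ j - 1) / (Q - 1) + C * (Q ^ j - 1) / (Q - 1)
      = (M + C) * (Q ^ j - 1) / (Q - 1) := by ring
  linarith

lemma gamma_nonneg (Q q M C : ℝ) (hQ : 1 < Q) (hq : 1 ≤ q) (hM : 0 ≤ M) (hC : 0 ≤ C) (j : ℕ) :
    0 ≤ GammaHat Q q M C j := by
  have hq0 : 0 < q := by linarith
  have hr1 : 1 / q ≤ 1 := by rw [div_le_one hq0]; exact hq
  have hQj : (1:ℝ) ≤ Q ^ j := one_le_pow₀ hQ.le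
  have hrj : (1 / q) ^ j ≤ 1 := pow_le_one₀ (by positivity) hr1
  have hQ1 : 0 < Q - 1 := by linarith
  have hQr : 0 < Q - 1 / q := by linarith
  unfold GammaHat
  have h1 : 0 ≤ M * (Q ^ j - 1) / (Q - 1) := by
    apply div_nonneg _ hQ1.le
    exact mul_nonneg hM (by linarith)
  have h2 : 0 ≤ (C / q) * (Q ^ j - (1 / q) ^ j) / (Q - 1 / q) := by
    apply div_nonneg _ hQr.le
    exact mul_nonneg (by positivity) (by linarith)
  linarith

theorem stmt13 (Q q M C : ℝ) (hQ : 1 < Q) (hq : 1 ≤ q) (hM : 0 ≤ M) (hC : 0 ≤ C)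
    (hMC : 0 < M + C) :
    Monotone (fun j : ℕ => GammaHat Q q M C j) ∧
    (∀ δ : ℝ, 0 < δ → δ * GammaHat Q q M C (jstar Q M C δ) ≤ Real.sqrt δ) ∧
    Tendsto (fun δ : ℝ => δ * GammaHat Q q M C (jstar Q M C δ))
      (nhdsWithin 0 (Set.Ioi 0)) (nhds 0) := by
  have hq0 : 0 < q := by linarith
  have hr1 : 1 / q ≤ 1 := by rw [div_le_one hq0]; exact hq
  have hr0 : 0 < 1 / q := by positivity
  have hQ1 : 0 < Q - 1 := by linarith
  have hQr : 0 < Q - 1 / q := by linarith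
  have hbound : ∀ δ : ℝ, 0 < δ → δ * GammaHat Q q M C (jstar Q M C δ) ≤ Real.sqrt δ := by
    intro δ hδ
    set s := Real.sqrt δ with hs
    have hs0 : 0 < s := Real.sqrt_pos.mpr hδ
    set A : ℝ := (Q - 1) / ((M + C) * s) + 1 with hA
    have hA1 : 1 < A := by
      have : 0 < (Q - 1) / ((M + C) * s) := by positivity
      simp only [hA]; linarith
    set j := jstar Q M C δ with hj
    have hlogQ : 0 < Real.log Q := Real.log_pos hQ
    have hjle : (j : ℝ) ≤ Real.log A / Real.log Q := by
      exact Nat.floor_le (div_nonneg (Real.log_nonneg hA1.le) hlogQ.le)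
    have hQjA : Q ^ j ≤ A := by
      have h1 : Real.log (Q ^ j) ≤ Real.log A := by
        rw [Real.log_pow]
        calc (j : ℝ) * Real.log Q ≤ (Real.log A / Real.log Q) * Real.log Q :=
              mul_le_mul_of_nonneg_right hjle hlogQ.le
          _ = Real.log A := by field_simp
      exact (Real.log_le_log_iff (by positivity) (by linarith)).mp h1
    have hg := gamma_le Q q M C hQ hq hM hC j
    have h2 : (M + C) * (Q ^ j - 1) / (Q - 1) ≤ 1 / s := by
      rw [div_le_div_iff₀ hQ1 hs0]
      have : (M + C) * (Q ^ j - 1) ≤ (M + C) * (A - 1) :=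
        mul_le_mul_of_nonneg_left (by linarith) hMC.le
      have hAe : (M + C) * (A - 1) * s = Q - 1 := by
        simp only [hA]
        field_simp
        ring
      nlinarith
    have hΓ : GammaHat Q q M C j ≤ 1 / s := le_trans hg h2
    have hΓ0 : 0 ≤ GammaHat Q q M C j := gamma_nonneg Q q M C hQ hq hM hC j
    have hδs : δ = s * s := (Real.mul_self_sqrt hδ.le).symm
    calc δ * GammaHat Q q M C j ≤ δ * (1 / s) :=
          mul_le_mul_of_nonneg_left hΓ hδ.le
      _ = s := by rw [hδs]; field_simp
  refine ⟨?_, hbound, ?_⟩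
  · apply monotone_nat_of_le_succ
    intro j
    unfold GammaHat
    have hQj : Q ^ j ≤ Q ^ (j + 1) := pow_le_pow_right₀ hQ.le (Nat.le_succ j)
    have hrj : (1 / q) ^ (j + 1) ≤ (1 / q) ^ j := pow_le_pow_of_le_one hr0.le hr1 (Nat.le_succ j)
    gcongr <;> first | exact hM | positivity | linarith
  · have h0 : ∀ δ ∈ Set.Ioi (0:ℝ), 0 ≤ δ * GammaHat Q q M C (jstar Q M C δ) := by
      intro δ hδ
      exact mul_nonneg (le_of_lt hδ) (gamma_nonneg Q q M C hQ hq hM hC _)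
    have hsqrt : Tendsto (fun δ : ℝ => Real.sqrt δ) (nhdsWithin 0 (Set.Ioi 0)) (nhds 0) := by
      have := Real.continuous_sqrt.tendsto 0
      rw [Real.sqrt_zero] at this
      exact this.mono_left nhdsWithin_le_nhds
    apply tendsto_of_tendsto_of_tendsto_of_le_of_le' tendsto_const_nhds hsqrt
    · filter_upwards [self_mem_nhdsWithin] with δ hδ using h0 δ hδ
    · filter_upwards [self_mem_nhdsWithin] with δ hδ using hbound δ hδ
end
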